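/- Let (g_λ)_{λ∈X} be a family of elements of ẑ[X] such that g_λ(λ) = 1 and g_λ(μ) = 0 unless μ ≤ λ, for every λ ∈ X. Then for every f ∈ ẑ[X] there exists a unique c ∈ ẑ[X] such that for every x ∈ X the sum Σ_{λ∈X} c(λ)·g_λ(x) has finitely many nonzero terms and equals f(x). Moreover, if supp(f) ⊆ X(≤μ₁) ∪ … ∪ X(≤μᵣ) then also supp(c) ⊆ X(≤μ₁) ∪ … ∪ X(≤μᵣ). -/

import Mathlib

/-- The weight lattice `X = ℤⁿ`. -/
abbrev X (n : ℕ) := Fin n → ℤ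

/-- The order on `X` induced by the simple roots `α`:
`lam ≤ mu` iff `mu - lam` is an `ℕ`-linear combination of the `α i`. -/
def rootsLE {n : ℕ} (α : Fin n → X n) (lam mu : X n) : Prop :=
  ∃ c : Fin n → ℕ, mu - lam = ∑ i, (c i : ℤ) • α i

/-- Membership in the completed group ring `ẑ[X]`. -/
def InZhat {n : ℕ} (α : Fin n → X n) (f : X n → ℤ) : Prop :=
  ∃ (r : ℕ) (μ : Fin r → X n), ∀ lam, f lam ≠ 0 → ∃ i, rootsLE α lam (μ i)

/-!
Linear independence of the simple roots makes `rootsLE α` a partial order with finite closed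
intervals. In such an order, a function supported below finitely many points `μᵢ` has only
finitely many support points above any given `x`, so the unitriangular system
`f x = ∑_{λ ≥ x} c λ * g λ x` can be solved downwards from the `μᵢ`:
`c x = f x - ∑_{x < λ} c λ * g λ x`. The solution is supported below the support of `f`.
For uniqueness, if a bounded `d ≠ 0` expanded to `0`, the expansion evaluated at a maximal point
`m` of the support of `d` above a point where `d` does not vanish would be `d m ≠ 0`.
-/

open Function Set

section Expansion
variable {P : Type*} [PartialOrder P] [LocallyFiniteOrder P]

open scoped Classical in
noncomputable def aboveIn (s : Finset P) (x : P) : Finset P := s.biUnion (Finset.Ioc x)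

variable {s : Finset P} {x y : P}

theorem mem_aboveIn : y ∈ aboveIn s x ↔ x < y ∧ y ∈ lowerClosure (s : Set P) := by
  simp only [aboveIn, Finset.mem_biUnion, Finset.mem_Ioc, mem_lowerClosure, Finset.mem_coe]
  aesop

theorem Ici_inter_lowerClosure_subset (s : Finset P) (x : P) :
    Ici x ∩ lowerClosure (s : Set P) ⊆ insert x ↑(aboveIn s x) := by
  rintro y ⟨hxy, hy⟩
  rcases hxy.eq_or_lt with rfl | hlt
  · exact mem_insert _ _
  · exact mem_insert_of_mem _ (mem_aboveIn.2 ⟨hlt, hy⟩)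

theorem card_aboveIn_lt (h : y ∈ aboveIn s x) : (aboveIn s y).card < (aboveIn s x).card := by
  refine Finset.card_lt_card (Finset.ssubset_iff_of_subset ?_ |>.2 ⟨y, h, ?_⟩)
  · intro z hz
    rw [mem_aboveIn] at h hz ⊢
    exact ⟨h.1.trans hz.1, hz.2⟩
  · exact fun hy => (mem_aboveIn.1 hy).1.false

variable (s) in
noncomputable def expansionCoeff (g : P → P → ℤ) (f : P → ℤ) (x : P) : ℤ :=
  f x - ∑ y ∈ (aboveIn s x).attach, expansionCoeff g f y * g y x
termination_by (aboveIn s x).card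
decreasing_by exact card_aboveIn_lt y.2

variable {g : P → P → ℤ} {f c c' : P → ℤ}

theorem expansionCoeff_eq (x : P) :
    expansionCoeff s g f x = f x - ∑ y ∈ aboveIn s x, expansionCoeff s g f y * g y x := by
  rw [expansionCoeff, Finset.sum_attach (aboveIn s x) fun y => expansionCoeff s g f y * g y x]

theorem mem_lowerClosure_support_of_expansionCoeff_ne_zero {x : P}
    (hx : expansionCoeff s g f x ≠ 0) : x ∈ lowerClosure (support f) := by
  rw [expansionCoeff_eq] at hx
  by_cases hfx : f x = 0
  · obtain ⟨y, hy, hne⟩ := Finset.exists_ne_zero_of_sum_ne_zero (by simpa [hfx] using hx)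
    obtain ⟨z, hz, hyz⟩ :=
      mem_lowerClosure_support_of_expansionCoeff_ne_zero (left_ne_zero_of_mul hne)
    exact ⟨z, hz, (mem_aboveIn.1 hy).1.le.trans hyz⟩
  · exact subset_lowerClosure hfx
termination_by (aboveIn s x).card
decreasing_by exact card_aboveIn_lt hy

theorem support_expansionCoeff_subset :
    support (expansionCoeff s g f) ⊆ lowerClosure (support f) :=
  fun _ => mem_lowerClosure_support_of_expansionCoeff_ne_zero

theorem support_expansionCoeff_subset_of_subset (hf : support f ⊆ lowerClosure (s : Set P)) :
    support (expansionCoeff s g f) ⊆ lowerClosure (s : Set P) :=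
  support_expansionCoeff_subset.trans (lowerClosure_le.2 hf)

theorem support_mul_apply_subset (hg : ∀ a b, g a b ≠ 0 → b ≤ a)
    (hc : support c ⊆ lowerClosure (s : Set P)) (x : P) :
    support (fun a => c a * g a x) ⊆ insert x ↑(aboveIn s x) := fun a ha =>
  Ici_inter_lowerClosure_subset s x
    ⟨hg a x (right_ne_zero_of_mul ha), hc (left_ne_zero_of_mul ha)⟩

theorem finite_support_mul_apply (hg : ∀ a b, g a b ≠ 0 → b ≤ a)
    (hc : support c ⊆ lowerClosure (s : Set P)) (x : P) :
    (support fun a => c a * g a x).Finite :=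
  ((aboveIn s x).finite_toSet.insert x).subset (support_mul_apply_subset hg hc x)

theorem finsum_expansionCoeff_mul (hg1 : ∀ a, g a a = 1) (hg : ∀ a b, g a b ≠ 0 → b ≤ a)
    (hf : support f ⊆ lowerClosure (s : Set P)) (x : P) :
    ∑ᶠ a, expansionCoeff s g f a * g a x = f x := by
  classical
  have hsub := support_mul_apply_subset hg (support_expansionCoeff_subset_of_subset (g := g) hf) x
  rw [← Finset.coe_insert] at hsub
  rw [finsum_eq_sum_of_support_subset _ hsub,
    Finset.sum_insert fun h => (mem_aboveIn.1 h).1.false, hg1, mul_one, expansionCoeff_eq x,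
    sub_add_cancel]

theorem eq_zero_of_forall_finsum_mul_eq_zero (hg1 : ∀ a, g a a = 1)
    (hg : ∀ a b, g a b ≠ 0 → b ≤ a) (hc : support c ⊆ lowerClosure (s : Set P))
    (h : ∀ x, ∑ᶠ a, c a * g a x = 0) : c = 0 := by
  by_contra hne
  obtain ⟨y, hy⟩ := Function.ne_iff.1 hne
  have hfin : (Ici y ∩ support c).Finite :=
    ((aboveIn s y).finite_toSet.insert y).subset fun a ha =>
      Ici_inter_lowerClosure_subset s y ⟨ha.1, hc ha.2⟩
  obtain ⟨m, hm⟩ := hfin.exists_maximal ⟨y, le_rfl, hy⟩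
  have hsum : ∑ᶠ a, c a * g a m = c m := by
    rw [finsum_eq_single _ m fun a ham => ?_, hg1, mul_one]
    by_contra hne
    have hma : m ≤ a := hg a m (right_ne_zero_of_mul hne)
    exact ham (hm.eq_of_ge ⟨hm.prop.1.trans hma, left_ne_zero_of_mul hne⟩ hma)
  exact hm.prop.2 (hsum ▸ h m)

theorem eq_of_forall_finsum_mul_eq (hg1 : ∀ a, g a a = 1) (hg : ∀ a b, g a b ≠ 0 → b ≤ a)
    {t : Finset P} (hc : support c ⊆ lowerClosure (s : Set P))
    (hc' : support c' ⊆ lowerClosure (t : Set P))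
    (h : ∀ x, ∑ᶠ a, c a * g a x = ∑ᶠ a, c' a * g a x) : c = c' := by
  classical
  refine sub_eq_zero.1 (eq_zero_of_forall_finsum_mul_eq_zero (s := s ∪ t) hg1 hg ?_ fun x => ?_)
  · refine (support_sub c c').trans (union_subset (hc.trans ?_) (hc'.trans ?_)) <;>
      exact lowerClosure_mono (by simp)
  · simp_rw [Pi.sub_apply, sub_mul]
    rw [finsum_sub_distrib (finite_support_mul_apply hg hc x) (finite_support_mul_apply hg hc' x),
      h x, sub_self]

end Expansion

section RootOrder
variable {n : ℕ} {α : Fin n → X n}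

theorem injective_sum_natCast_smul (hα : LinearIndependent ℚ (fun i j => (α i j : ℚ))) :
    Injective fun c : Fin n → ℕ => ∑ i, (c i : ℤ) • α i := by
  have hℕ : LinearIndependent ℕ α :=
    .of_comp (((Algebra.linearMap ℤ ℚ).compLeft (Fin n)).restrictScalars ℕ)
      (hα.restrict_scalars' ℕ)
  intro c d h
  funext i
  exact Fintype.linearIndependent_iffₛ.1 hℕ c d
    (by simpa only [Nat.cast_smul_eq_nsmul] using h) i

theorem rootsLE_refl (x : X n) : rootsLE α x x := ⟨0, by simp⟩

theorem rootsLE_trans {x y z : X n} : rootsLE α x y → rootsLE α y z → rootsLE α x z := by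
  rintro ⟨c, hc⟩ ⟨d, hd⟩
  refine ⟨c + d, ?_⟩
  simp only [Pi.add_apply, Nat.cast_add, add_smul, Finset.sum_add_distrib, ← hc, ← hd]
  abel

theorem rootsLE_coeffs_add (hα : LinearIndependent ℚ (fun i j => (α i j : ℚ)))
    {x y z : X n} {c d e : Fin n → ℕ} (hc : y - x = ∑ i, (c i : ℤ) • α i)
    (hd : z - y = ∑ i, (d i : ℤ) • α i) (he : z - x = ∑ i, (e i : ℤ) • α i) :
    c + d = e := by
  apply injective_sum_natCast_smul hα
  simp only [Pi.add_apply, Nat.cast_add, add_smul, Finset.sum_add_distrib, ← hc, ← hd, ← he]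
  abel

theorem rootsLE_antisymm (hα : LinearIndependent ℚ (fun i j => (α i j : ℚ))) {x y : X n} :
    rootsLE α x y → rootsLE α y x → x = y := by
  rintro ⟨c, hc⟩ ⟨d, hd⟩
  have hcd : c + d = 0 := rootsLE_coeffs_add hα hc hd (by simp)
  have hc0 : c = 0 := funext fun i => (Nat.add_eq_zero_iff.1 (congrFun hcd i)).1
  rw [hc0] at hc
  simpa [sub_eq_zero, eq_comm] using hc

theorem finite_rootsLE_Icc (hα : LinearIndependent ℚ (fun i j => (α i j : ℚ))) (x z : X n) :
    {y | rootsLE α x y ∧ rootsLE α y z}.Finite := by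
  by_cases hxz : rootsLE α x z
  · obtain ⟨e, he⟩ := hxz
    refine ((Set.finite_Iic e).image fun c => x + ∑ i, (c i : ℤ) • α i).subset ?_
    rintro y ⟨⟨c, hc⟩, ⟨d, hd⟩⟩
    refine ⟨c, ?_, show x + _ = y by rw [← hc]; abel⟩
    rw [← rootsLE_coeffs_add hα hc hd he]
    exact fun i => Nat.le_add_right _ _
  · exact Set.finite_empty.subset fun y hy => hxz (rootsLE_trans hy.1 hy.2)

def RootOrder (_α : Fin n → X n) : Type := X n

variable [Fact (LinearIndependent ℚ (fun i j => (α i j : ℚ)))]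

instance : PartialOrder (RootOrder α) where
  le := rootsLE α
  le_refl := rootsLE_refl
  le_trans _ _ _ := rootsLE_trans
  le_antisymm _ _ := rootsLE_antisymm Fact.out

noncomputable instance : LocallyFiniteOrder (RootOrder α) :=
  .ofFiniteIcc fun x z => finite_rootsLE_Icc Fact.out x z

theorem InZhat.exists_finset {f : RootOrder α → ℤ} (hf : InZhat α f) :
    ∃ s : Finset (RootOrder α), support f ⊆ lowerClosure (s : Set (RootOrder α)) := by
  classical
  obtain ⟨r, μ, hμ⟩ := hf
  refine ⟨Finset.univ.image μ, fun y hy => ?_⟩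
  obtain ⟨i, hi⟩ := hμ y hy
  exact ⟨μ i, Finset.mem_image.2 ⟨i, Finset.mem_univ i, rfl⟩, hi⟩

end RootOrder

theorem unique_expansion_in_basis_general {n : ℕ} (α : Fin n → X n)
    (hα : LinearIndependent ℚ (fun i j => (α i j : ℚ)))
    (g : X n → X n → ℤ)
    (hg1 : ∀ lam, g lam lam = 1)
    (hg0 : ∀ lam μ, ¬ rootsLE α μ lam → g lam μ = 0)
    (f : X n → ℤ) (hf : InZhat α f) :
    ∃ c : X n → ℤ,
      (InZhat α c ∧
        ∀ x : X n, {lam : X n | c lam * g lam x ≠ 0}.Finite ∧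
          (∑ᶠ lam : X n, c lam * g lam x) = f x) ∧
      (∀ (r : ℕ) (μ : Fin r → X n),
        (∀ y, f y ≠ 0 → ∃ i, rootsLE α y (μ i)) →
        ∀ y, c y ≠ 0 → ∃ i, rootsLE α y (μ i)) ∧
      (∀ c' : X n → ℤ,
        (InZhat α c' ∧
          ∀ x : X n, {lam : X n | c' lam * g lam x ≠ 0}.Finite ∧
            (∑ᶠ lam : X n, c' lam * g lam x) = f x) →
        c' = c) := by
  have : Fact (LinearIndependent ℚ (fun i j => (α i j : ℚ))) := ⟨hα⟩
  have hg : ∀ lam μ : RootOrder α, g lam μ ≠ 0 → μ ≤ lam := fun lam μ hμ =>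
    of_not_not fun h => hμ (hg0 lam μ h)
  obtain ⟨s, hs⟩ := hf.exists_finset
  let c : RootOrder α → ℤ := expansionCoeff s g f
  have hc := support_expansionCoeff_subset_of_subset (P := RootOrder α) (g := g) hs
  have hbound : ∀ (r : ℕ) (μ : Fin r → X n),
      (∀ y, f y ≠ 0 → ∃ i, rootsLE α y (μ i)) →
      ∀ y, c y ≠ 0 → ∃ i, rootsLE α y (μ i) := by
    intro r μ hμ y hy
    obtain ⟨z, hz, hyz⟩ := support_expansionCoeff_subset hy
    obtain ⟨i, hi⟩ := hμ z hz
    exact ⟨i, rootsLE_trans hyz hi⟩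
  have hexp : ∀ x, {lam | c lam * g lam x ≠ 0}.Finite ∧ ∑ᶠ lam, c lam * g lam x = f x :=
    fun x => ⟨finite_support_mul_apply hg hc x,
      finsum_expansionCoeff_mul (P := RootOrder α) hg1 hg hs x⟩
  obtain ⟨r, μ, hμ⟩ := hf
  refine ⟨c, ⟨⟨r, μ, hbound r μ hμ⟩, hexp⟩, hbound, fun c' ⟨hc'Z, hc'⟩ => ?_⟩
  obtain ⟨t, ht⟩ := hc'Z.exists_finset
  exact eq_of_forall_finsum_mul_eq (P := RootOrder α) hg1 hg ht hc fun x =>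
    (hc' x).2.trans (hexp x).2.symm

/-- Let `(g_λ)` be a family in `ẑ[X]` with `g_λ(λ) = 1` and `g_λ(μ) = 0` unless
`μ ≤ λ`.  Every `f ∈ ẑ[X]` has a unique expansion `f = Σ_λ c(λ) g_λ` with
`c ∈ ẑ[X]`, each value being a finite sum; moreover if
`supp f ⊆ X(≤μ₁) ∪ … ∪ X(≤μᵣ)` then `supp c ⊆ X(≤μ₁) ∪ … ∪ X(≤μᵣ)`. -/
theorem unique_expansion_in_basis {n : ℕ} (hn : 1 ≤ n) (α : Fin n → X n)
    (hα : LinearIndependent ℚ (fun i j => (α i j : ℚ)))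
    (g : X n → X n → ℤ)
    (hgZ : ∀ lam, InZhat α (g lam))
    (hg1 : ∀ lam, g lam lam = 1)
    (hg0 : ∀ lam μ, ¬ rootsLE α μ lam → g lam μ = 0)
    (f : X n → ℤ) (hf : InZhat α f) :
    ∃ c : X n → ℤ,
      (InZhat α c ∧
        ∀ x : X n, {lam : X n | c lam * g lam x ≠ 0}.Finite ∧
          (∑ᶠ lam : X n, c lam * g lam x) = f x) ∧
      (∀ (r : ℕ) (μ : Fin r → X n),
        (∀ y, f y ≠ 0 → ∃ i, rootsLE α y (μ i)) →
        ∀ y, c y ≠ 0 → ∃ i, rootsLE α y (μ i)) ∧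
      (∀ c' : X n → ℤ,
        (InZhat α c' ∧
          ∀ x : X n, {lam : X n | c' lam * g lam x ≠ 0}.Finite ∧
            (∑ᶠ lam : X n, c' lam * g lam x) = f x) →
        c' = c) :=
  unique_expansion_in_basis_general α hα g hg1 hg0 f hf
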